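/- arXiv:2510.03923 — 2 statements merged into one kernel-verified Lean document; each statement's English description precedes it below -/
import Mathlib

section
/- Suppose ρ is normalized Lipschitz, each filter coefficient t ↦ h_{fgk}^{(ℓ,t)} is continuous on [0,T], W : I² → ℝ is measurable with |W| ≤ 1 a.e., and Z ∈ L^∞(I;ℝ^F). Then for every T > 0 the Graphon Neural Differential Equation dX/dt(t) = Φ(W; X(t); H(t)), X(0) = Z has a unique solution X : [0,T] → L^∞(I;ℝ^F) that is continuously differentiable as a curve in the Banach space L^∞(I;ℝ^F). -/
open MeasureTheory Filter Set
open scoped ENNReal NNReal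

noncomputable section

/-- Lebesgue measure restricted to the unit interval `I = [0,1]`. -/
def μI : Measure ℝ := volume.restrict (Set.Icc (0:ℝ) 1)

/-- Lebesgue measure restricted to the unit square `I² = [0,1]²`. -/
def μI2 : Measure (ℝ × ℝ) := volume.restrict ((Set.Icc (0:ℝ) 1) ×ˢ (Set.Icc (0:ℝ) 1))

/-- The graphon integral operator `(T_W x)(v) = ∫_I W(u,v) x(u) du`. -/
def graphonOp (W : ℝ → ℝ → ℝ) (x : ℝ → ℝ) : ℝ → ℝ :=
  fun v => ∫ u in Set.Icc (0:ℝ) 1, W u v * x u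

/-- `k`-fold composition `T_W^k` (identity for `k = 0`). -/
def graphonIter (W : ℝ → ℝ → ℝ) (k : ℕ) (x : ℝ → ℝ) : ℝ → ℝ :=
  (graphonOp W)^[k] x

/-- `ρ` is normalized Lipschitz: `|ρ x − ρ y| ≤ |x − y|` and `ρ 0 = 0`. -/
def NormalizedLipschitz (ρ : ℝ → ℝ) : Prop :=
  (∀ x y : ℝ, |ρ x - ρ y| ≤ |x - y|) ∧ ρ 0 = 0

/-- One layer of a graphon neural network. -/
def gnnLayer (F K : ℕ) (W : ℝ → ℝ → ℝ) (ρ : ℝ → ℝ)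
    (h : Fin F → Fin F → Fin K → ℝ) (X : Fin F → ℝ → ℝ) : Fin F → ℝ → ℝ :=
  fun f u => ρ (∑ g : Fin F, ∑ k : Fin K, h f g k * graphonIter W (k : ℕ) (X g) u)

/-- The `L`-layer graphon neural network `Φ(W; X; h)`. -/
def gnn (F K L : ℕ) (W : ℝ → ℝ → ℝ) (ρ : ℝ → ℝ)
    (h : Fin L → Fin F → Fin F → Fin K → ℝ) (X : Fin F → ℝ → ℝ) : Fin F → ℝ → ℝ :=
  (List.ofFn h).foldl (fun Y hl => gnnLayer F K W ρ hl Y) X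

/-- The mixed norm `‖X‖_{L^p(I;ℝ^F)} = (∑_f ‖X_f‖_{L^p(I)}²)^{1/2}`. -/
def vecLpNorm (F : ℕ) (p : ℝ≥0∞) (X : Fin F → ℝ → ℝ) : ℝ :=
  Real.sqrt (∑ f : Fin F, ((eLpNorm (X f) p μI).toReal) ^ 2)

/-- `X : ℝ → L^∞(I;ℝ^F)` is, on `[0,T]`, a continuously differentiable solution of the
Graphon-NDE `dX/dt(t) = Φ(W; X(t); H(t))`, `X(0) = Z`, in the Banach space `L^∞(I;ℝ^F)`. -/
def IsGNDESolution (F K L : ℕ) (T : ℝ) (W : ℝ → ℝ → ℝ) (ρ : ℝ → ℝ)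
    (H : ℝ → Fin L → Fin F → Fin F → Fin K → ℝ) (Z : Fin F → ℝ → ℝ)
    (X : ℝ → Fin F → Lp ℝ ⊤ μI) : Prop :=
  (∀ f, (X 0 f : ℝ → ℝ) =ᵐ[μI] Z f) ∧
  ∃ X' : ℝ → Fin F → Lp ℝ ⊤ μI,
    ContinuousOn X' (Set.Icc 0 T) ∧
    ∀ t ∈ Set.Icc (0:ℝ) T,
      HasDerivWithinAt X (X' t) (Set.Icc 0 T) t ∧
      ∀ f, (X' t f : ℝ → ℝ) =ᵐ[μI]
        gnn F K L W ρ (H t) (fun g => (X t g : ℝ → ℝ)) f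

/-- Operator norm (from `L²(I)` to `L²(I)`) of the difference `T_W − T_{W'}`. -/
def graphonOpNormSub (W W' : ℝ → ℝ → ℝ) : ℝ :=
  ⨆ x : {x : ℝ → ℝ // MemLp x 2 μI ∧ eLpNorm x 2 μI ≤ 1},
    (eLpNorm (fun v => graphonOp W x v - graphonOp W' x v) 2 μI).toReal

/-- Left endpoint `u_i = (i−1)/n` of the cell `I_i` containing `u`. -/
def stepPt (n : ℕ) (u : ℝ) : ℝ := (⌊(n : ℝ) * u⌋ : ℝ) / n

/-- Sampled step kernel: `Wₙ(u,v) = W(u_i,u_j)` for `(u,v) ∈ I_i × I_j`. -/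
def sampKernel (W : ℝ → ℝ → ℝ) (n : ℕ) : ℝ → ℝ → ℝ :=
  fun u v => W (stepPt n u) (stepPt n v)

/-- Sampled step datum: `Zₙ(u) = Z(u_i)` for `u ∈ I_i`. -/
def sampDatum (F : ℕ) (Z : Fin F → ℝ → ℝ) (n : ℕ) : Fin F → ℝ → ℝ :=
  fun f u => Z f (stepPt n u)

/-- Support `W⁺ = {(u,v) ∈ I² : W(u,v) = 1}`. -/
def supportSet (W : ℝ → ℝ → ℝ) : Set (ℝ × ℝ) :=
  {p : ℝ × ℝ | p.1 ∈ Set.Icc (0:ℝ) 1 ∧ p.2 ∈ Set.Icc (0:ℝ) 1 ∧ W p.1 p.2 = 1}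

/-- The cell `I_i = [u_i, u_i + 1/n)` containing `u`. -/
def cell (n : ℕ) (u : ℝ) : Set ℝ := Set.Ico (stepPt n u) (stepPt n u + 1 / n)

open scoped Classical in
/-- Cell-intersection step kernel: `Wₙ = 1` on `I_i × I_j` iff `(I_i × I_j) ∩ W⁺ ≠ ∅`. -/
def interKernel (W : ℝ → ℝ → ℝ) (n : ℕ) : ℝ → ℝ → ℝ :=
  fun u v => if ((cell n u ×ˢ cell n v) ∩ supportSet W).Nonempty then 1 else 0

/-- Cell-average step datum: `Zₙ(u) = n ∫_{I_i} Z(v) dv` for `u ∈ I_i`. -/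
def cellAvg (F : ℕ) (Z : Fin F → ℝ → ℝ) (n : ℕ) : Fin F → ℝ → ℝ :=
  fun f u => (n : ℝ) * ∫ v in cell n u, Z f v

/-- Number of closed `δ`-mesh squares `[iδ,(i+1)δ] × [jδ,(j+1)δ]`, `i,j ∈ ℤ`, meeting `Ω`. -/
def meshCount (δ : ℝ) (Ω : Set (ℝ × ℝ)) : ℕ :=
  Set.ncard {p : ℤ × ℤ |
    ((Set.Icc ((p.1 : ℝ) * δ) (((p.1 : ℝ) + 1) * δ) ×ˢ
      Set.Icc ((p.2 : ℝ) * δ) (((p.2 : ℝ) + 1) * δ)) ∩ Ω).Nonempty}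

/-- Upper box-counting dimension `limsup_{δ→0⁺} log N_δ(Ω) / (−log δ)`. -/
def upperBoxDim (Ω : Set (ℝ × ℝ)) : ℝ :=
  Filter.limsup (fun δ : ℝ => Real.log (meshCount δ Ω) / (-Real.log δ))
    (nhdsWithin 0 (Set.Ioi 0))

end

/-!
Because `|W| ≤ 1` and `I` has measure one, `T_W` is a contraction of `L^∞(I)`. Hence each layer
`X ↦ ρ(∑ h T_W^k X)` is a Lipschitz self-map of `L^∞(I;ℝ^F)` with constant `∑ |h|`, depending
continuously on the coefficients, so `X ↦ Φ(W; X; H(t))` is Lipschitz uniformly in `t ∈ [0,T]`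
(by compactness) and continuous in `t`. For a globally Lipschitz field the Picard–Lindelöf
solutions exist on intervals of a length `1/(2(Λ+1))` independent of the initial value, so finitely
many of them concatenate to a solution on `[0,T]`; uniqueness is Grönwall's inequality.
-/

section ODE

variable {E : Type*} [NormedAddCommGroup E] [NormedSpace ℝ E] {v : ℝ → E → E}

theorem hasDerivWithinAt_Icc_piecewise_Iic {a b c : ℝ} (hab : a ≤ b) (hbc : b ≤ c)
    {f g : ℝ → E} (hf : ∀ t ∈ Icc a b, HasDerivWithinAt f (v t (f t)) (Icc a b) t)
    (hg : ∀ t ∈ Icc b c, HasDerivWithinAt g (v t (g t)) (Icc b c) t) (hfg : f b = g b) :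
    ∀ t ∈ Icc a c, HasDerivWithinAt ((Iic b).piecewise f g)
      (v t ((Iic b).piecewise f g t)) (Icc a c) t := by
  classical
  set G := (Iic b).piecewise f g
  have hGf : EqOn G f (Icc a b) := fun t ht => piecewise_eq_of_mem _ _ _ ht.2
  have hGg : EqOn G g (Icc b c) := fun t ht => by
    rcases ht.1.eq_or_lt with rfl | hbt
    · exact (piecewise_eq_of_mem _ _ _ (le_refl b)).trans hfg
    · exact piecewise_eq_of_notMem _ _ _ (not_le.2 hbt)
  intro t ht
  rw [← Icc_union_Icc_eq_Icc hab hbc]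
  refine HasDerivWithinAt.union ?_ ?_
  · by_cases htab : t ∈ Icc a b
    · rw [hGf htab]; exact (hf t htab).congr_of_mem hGf htab
    · exact HasFDerivWithinAt.of_notMem_closure (by rwa [closure_Icc])
  · by_cases htbc : t ∈ Icc b c
    · rw [hGg htbc]; exact (hg t htbc).congr_of_mem hGg htbc
    · exact HasFDerivWithinAt.of_notMem_closure (by rwa [closure_Icc])

theorem exists_hasDerivWithinAt_Icc_of_mul_sub_le_one [CompleteSpace E] {Λ M : ℝ≥0}
    {a b : ℝ} (hab : a ≤ b) (hlip : ∀ t ∈ Icc a b, LipschitzWith Λ (v t))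
    (hcont : ∀ x, ContinuousOn (v · x) (Icc a b)) (hM : ∀ t ∈ Icc a b, ‖v t 0‖ ≤ M)
    (hlen : 2 * (Λ + 1) * (b - a) ≤ 1) (x₀ : E) :
    ∃ f : ℝ → E, f a = x₀ ∧ ∀ t ∈ Icc a b, HasDerivWithinAt f (v t (f t)) (Icc a b) t := by
  -- `R` is chosen so that `‖v t x‖ ≤ 2 (Λ + 1) R` on `closedBall x₀ R`
  set R : ℝ≥0 := M + ‖x₀‖₊
  have hPL : IsPicardLindelof v (⟨a, left_mem_Icc.2 hab⟩ : Icc a b) x₀ R 0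
      (M + Λ * (‖x₀‖₊ + R)) Λ := by
    refine ⟨fun t ht => (hlip t ht).lipschitzOnWith, fun x _ => hcont x, ?_, ?_⟩
    · intro t ht x hx
      have hx' : ‖x‖ ≤ ‖x₀‖ + R :=
        (norm_le_norm_add_norm_sub' x x₀).trans (by gcongr; exact mem_closedBall_iff_norm.1 hx)
      calc ‖v t x‖ ≤ ‖v t 0‖ + ‖v t x - v t 0‖ := norm_le_norm_add_norm_sub' _ _
        _ ≤ M + Λ * ‖x‖ := add_le_add (hM t ht) (by simpa using (hlip t ht).norm_sub_le x 0)
        _ ≤ M + Λ * (‖x₀‖ + R) := by gcongr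
        _ = _ := by push_cast; ring
    · simp only [sub_self, max_eq_left (sub_nonneg.2 hab), NNReal.coe_zero, sub_zero]
      push_cast
      calc (M + Λ * (‖x₀‖ + (M + ‖x₀‖))) * (b - a)
          ≤ (2 * (Λ + 1) * (M + ‖x₀‖)) * (b - a) := by
            refine mul_le_mul_of_nonneg_right ?_ (sub_nonneg.2 hab)
            nlinarith [norm_nonneg x₀, M.coe_nonneg, Λ.coe_nonneg]
        _ = (M + ‖x₀‖) * (2 * (Λ + 1) * (b - a)) := by ring
        _ ≤ M + ‖x₀‖ := mul_le_of_le_one_right (by positivity) hlen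
  exact hPL.exists_eq_forall_mem_Icc_hasDerivWithinAt₀

theorem exists_hasDerivWithinAt_Icc_of_mul_sub_le_nat [CompleteSpace E] {Λ M : ℝ≥0}
    {a b : ℝ} (hab : a ≤ b) (hlip : ∀ t ∈ Icc a b, LipschitzWith Λ (v t))
    (hcont : ∀ x, ContinuousOn (v · x) (Icc a b)) (hM : ∀ t ∈ Icc a b, ‖v t 0‖ ≤ M)
    (n : ℕ) (hlen : 2 * (Λ + 1) * (b - a) ≤ n) (x₀ : E) :
    ∃ f : ℝ → E, f a = x₀ ∧ ∀ t ∈ Icc a b, HasDerivWithinAt f (v t (f t)) (Icc a b) t := by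
  induction n generalizing a x₀ with
  | zero =>
    exact exists_hasDerivWithinAt_Icc_of_mul_sub_le_one hab hlip hcont hM
      (hlen.trans (by simp)) x₀
  | succ n ih =>
    rcases le_or_gt (2 * (Λ + 1) * (b - a)) 1 with hshort | hlong
    · exact exists_hasDerivWithinAt_Icc_of_mul_sub_le_one hab hlip hcont hM hshort x₀
    set m := a + 1 / (2 * (Λ + 1))
    have hm : 2 * (Λ + 1) * (m - a) = 1 := by simp only [m]; field_simp; ring
    have ham : a ≤ m := le_add_of_nonneg_right (by positivity)
    have hmb : m ≤ b := by
      have := lt_of_mul_lt_mul_left (hm.trans_lt hlong) (by positivity)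
      linarith
    have hsub₁ : Icc a m ⊆ Icc a b := Icc_subset_Icc_right hmb
    have hsub₂ : Icc m b ⊆ Icc a b := Icc_subset_Icc_left ham
    obtain ⟨f, hf₀, hf⟩ := exists_hasDerivWithinAt_Icc_of_mul_sub_le_one ham
      (fun t ht => hlip t (hsub₁ ht)) (fun x => (hcont x).mono hsub₁)
      (fun t ht => hM t (hsub₁ ht)) hm.le x₀
    obtain ⟨g, hg₀, hg⟩ := ih hmb (fun t ht => hlip t (hsub₂ ht)) (fun x => (hcont x).mono hsub₂)
      (fun t ht => hM t (hsub₂ ht)) (by push_cast at hlen; linarith) (f m)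
    exact ⟨_, (piecewise_eq_of_mem (Iic m) f g ham).trans hf₀,
      hasDerivWithinAt_Icc_piecewise_Iic ham hmb hf hg hg₀.symm⟩

theorem exists_hasDerivWithinAt_Icc_of_lipschitzWith [CompleteSpace E] {Λ : ℝ≥0}
    {a b : ℝ} (hab : a ≤ b) (hlip : ∀ t ∈ Icc a b, LipschitzWith Λ (v t))
    (hcont : ∀ x, ContinuousOn (v · x) (Icc a b)) (x₀ : E) :
    ∃ f : ℝ → E, f a = x₀ ∧ ∀ t ∈ Icc a b, HasDerivWithinAt f (v t (f t)) (Icc a b) t := by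
  obtain ⟨M, hM⟩ := isCompact_Icc.exists_bound_of_continuousOn (hcont 0)
  exact exists_hasDerivWithinAt_Icc_of_mul_sub_le_nat hab hlip hcont
    (M := M.toNNReal) (fun t ht => (hM t ht).trans (Real.le_coe_toNNReal M)) _ (Nat.le_ceil _) x₀

theorem eqOn_Icc_of_hasDerivWithinAt_of_lipschitzWith {Λ : ℝ≥0} {a b : ℝ} {f g : ℝ → E}
    (hlip : ∀ t ∈ Ico a b, LipschitzWith Λ (v t))
    (hf : ∀ t ∈ Icc a b, HasDerivWithinAt f (v t (f t)) (Icc a b) t)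
    (hg : ∀ t ∈ Icc a b, HasDerivWithinAt g (v t (g t)) (Icc a b) t) (ha : f a = g a) :
    EqOn f g (Icc a b) :=
  ODE_solution_unique_of_mem_Icc_right (s := fun _ => univ)
    (fun t ht => (hlip t ht).lipschitzOnWith) (fun t ht => (hf t ht).continuousWithinAt)
    (fun t ht => (hf t (Ico_subset_Icc_self ht)).mono_of_mem_nhdsWithin (Icc_mem_nhdsGE_of_mem ht))
    (fun _ _ => trivial) (fun t ht => (hg t ht).continuousWithinAt)
    (fun t ht => (hg t (Ico_subset_Icc_self ht)).mono_of_mem_nhdsWithin (Icc_mem_nhdsGE_of_mem ht))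
    (fun _ _ => trivial) ha

end ODE

instance : IsProbabilityMeasure μI := ⟨by simp [μI, Real.volume_Icc]⟩

theorem MeasureTheory.Lp.ae_norm_le_norm_top {α E : Type*} [MeasurableSpace α] {μ : Measure α}
    [NormedAddCommGroup E] (x : Lp E ∞ μ) : ∀ᵐ a ∂μ, ‖x a‖ ≤ ‖x‖ := by
  filter_upwards [enorm_ae_le_eLpNormEssSup x μ] with a ha
  rw [Lp.norm_def, eLpNorm_exponent_top]
  exact (ENNReal.toReal_mono (eLpNorm_exponent_top (f := x) ▸ Lp.eLpNorm_ne_top x) ha)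

theorem μI2_eq_prod : μI2 = μI.prod μI := by
  rw [μI, μI2, Measure.prod_restrict, ← Measure.volume_eq_prod]

theorem ae_ae_swap_of_ae_μI2 {P : ℝ × ℝ → Prop} (h : ∀ᵐ p ∂μI2, P p) :
    ∀ᵐ v ∂μI, ∀ᵐ u ∂μI, P (u, v) := by
  rw [μI2_eq_prod] at h
  exact Measure.ae_ae_of_ae_prod (Measure.measurePreserving_swap.quasiMeasurePreserving.ae h)

section GraphonOp

variable {W : ℝ → ℝ → ℝ}

theorem graphonOp_congr_ae {x y : ℝ → ℝ} (h : x =ᵐ[μI] y) : graphonOp W x = graphonOp W y :=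
  funext fun v => integral_congr_ae (h.mono fun u hu => by simp only [hu])

theorem graphonIter_congr_ae {x y : ℝ → ℝ} (h : x =ᵐ[μI] y) (k : ℕ) :
    graphonIter W k x =ᵐ[μI] graphonIter W k y := by
  cases k with
  | zero => exact h
  | succ k =>
    simp only [graphonIter, Function.iterate_succ_apply, graphonOp_congr_ae h]
    rfl

theorem aestronglyMeasurable_graphonOp (hWm : Measurable (Function.uncurry W)) {x : ℝ → ℝ}
    (hx : AEStronglyMeasurable x μI) : AEStronglyMeasurable (graphonOp W x) μI := by
  rw [graphonOp_congr_ae hx.ae_eq_mk]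
  have : StronglyMeasurable (fun p : ℝ × ℝ => W p.2 p.1 * hx.mk x p.2) :=
    ((hWm.comp measurable_swap).mul (hx.measurable_mk.comp measurable_snd)).stronglyMeasurable
  exact this.integral_prod_right'.aestronglyMeasurable

end GraphonOp

section GraphonOpLinf

variable {W : ℝ → ℝ → ℝ} (hWm : Measurable (Function.uncurry W))
  (hW : ∀ᵐ v ∂μI, ∀ᵐ u ∂μI, |W u v| ≤ 1)

include hWm in
theorem integrable_mul_of_ae_abs_le_one {v : ℝ} (hv : ∀ᵐ u ∂μI, |W u v| ≤ 1) (x : Lp ℝ ∞ μI) :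
    Integrable (fun u => W u v * x u) μI :=
  ((Lp.memLp x).integrable le_top).bdd_mul
    (hWm.comp (measurable_id.prodMk measurable_const)).aestronglyMeasurable hv

include hW in
theorem ae_norm_graphonOp_le (x : Lp ℝ ∞ μI) : ∀ᵐ v ∂μI, ‖graphonOp W x v‖ ≤ ‖x‖ := by
  filter_upwards [hW] with v hv
  have hbound : ∀ᵐ u ∂μI, ‖W u v * x u‖ ≤ ‖x‖ := by
    filter_upwards [hv, Lp.ae_norm_le_norm_top x] with u hWu hxu
    rw [norm_mul]
    exact (mul_le_mul hWu hxu (norm_nonneg _) zero_le_one).trans_eq (one_mul _)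
  exact (norm_integral_le_of_norm_le_const hbound).trans_eq (by simp)

include hWm hW in
theorem memLp_graphonOp (x : Lp ℝ ∞ μI) : MemLp (graphonOp W x) ∞ μI :=
  memLp_top_of_bound (aestronglyMeasurable_graphonOp hWm (Lp.aestronglyMeasurable x)) _
    (ae_norm_graphonOp_le hW x)

include hWm hW in
theorem graphonOp_add_ae (x y : Lp ℝ ∞ μI) :
    graphonOp W ⇑(x + y) =ᵐ[μI] graphonOp W x + graphonOp W y := by
  rw [graphonOp_congr_ae (Lp.coeFn_add x y)]
  filter_upwards [hW] with v hv
  simp only [graphonOp, Pi.add_apply, mul_add]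
  exact integral_add (integrable_mul_of_ae_abs_le_one hWm hv x) (integrable_mul_of_ae_abs_le_one hWm hv y)

theorem graphonOp_smul (c : ℝ) (x : ℝ → ℝ) : graphonOp W (c • x) = c • graphonOp W x := by
  funext v
  simp only [graphonOp, Pi.smul_apply, smul_eq_mul, mul_left_comm _ c, integral_const_mul]

/-- On raw functions `graphonOp W` is additive only almost everywhere (the integral is `0` where
the integrand is not integrable); on `L^∞(I)` it becomes a linear contraction. -/
noncomputable def graphonOpLinf : Lp ℝ ∞ μI →L[ℝ] Lp ℝ ∞ μI :=
  LinearMap.mkContinuous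
    { toFun := fun x => (memLp_graphonOp hWm hW x).toLp
      map_add' := fun x y => by
        rw [← MemLp.toLp_add]
        exact MemLp.toLp_congr _ _ (graphonOp_add_ae hWm hW x y)
      map_smul' := fun c x => by
        rw [RingHom.id_apply, ← MemLp.toLp_const_smul]
        exact MemLp.toLp_congr _ _
          (.of_eq ((graphonOp_congr_ae (Lp.coeFn_smul c x)).trans (graphonOp_smul c x))) }
    1 fun x => by
      refine (Lp.norm_le_of_ae_bound (norm_nonneg x) ?_).trans_eq (by simp)
      filter_upwards [MemLp.coeFn_toLp (memLp_graphonOp hWm hW x), ae_norm_graphonOp_le hW x]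
        with v hv hbound
      exact (congrArg norm hv).trans_le hbound

theorem coeFn_graphonOpLinf (x : Lp ℝ ∞ μI) : graphonOpLinf hWm hW x =ᵐ[μI] graphonOp W x :=
  MemLp.coeFn_toLp (memLp_graphonOp hWm hW x)

theorem norm_graphonOpLinf_le : ‖graphonOpLinf hWm hW‖ ≤ 1 :=
  LinearMap.mkContinuous_norm_le _ zero_le_one _

theorem norm_graphonOpLinf_pow_apply_le (k : ℕ) (x : Lp ℝ ∞ μI) :
    ‖(graphonOpLinf hWm hW ^ k) x‖ ≤ ‖x‖ := by
  induction k with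
  | zero => simp
  | succ k ih =>
    rw [pow_succ', mul_apply_eq_comp]
    exact ((graphonOpLinf hWm hW).le_of_opNorm_le (norm_graphonOpLinf_le hWm hW) _).trans
      (by rwa [one_mul])

theorem coeFn_graphonOpLinf_pow (k : ℕ) (x : Lp ℝ ∞ μI) :
    (graphonOpLinf hWm hW ^ k) x =ᵐ[μI] graphonIter W k x := by
  induction k with
  | zero => simp [graphonIter]
  | succ k ih =>
    rw [pow_succ', mul_apply_eq_comp, graphonIter, Function.iterate_succ_apply',
      ← graphonIter, ← graphonOp_congr_ae ih]
    exact coeFn_graphonOpLinf hWm hW _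

end GraphonOpLinf

theorem NormalizedLipschitz.lipschitzWith {ρ : ℝ → ℝ} (hρ : NormalizedLipschitz ρ) :
    LipschitzWith 1 ρ :=
  LipschitzWith.of_dist_le_mul fun x y => by simpa [Real.dist_eq] using hρ.1 x y

theorem gnn_succ {F K L : ℕ} (W : ℝ → ℝ → ℝ) (ρ : ℝ → ℝ)
    (h : Fin (L + 1) → Fin F → Fin F → Fin K → ℝ) (X : Fin F → ℝ → ℝ) :
    gnn F K (L + 1) W ρ h X = gnn F K L W ρ (Fin.tail h) (gnnLayer F K W ρ (h 0) X) := by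
  simp only [gnn, List.ofFn_succ, List.foldl_cons]
  rfl

section GnnLinf

variable {F K L : ℕ} {W : ℝ → ℝ → ℝ} {ρ : ℝ → ℝ} (hWm : Measurable (Function.uncurry W))
  (hW : ∀ᵐ v ∂μI, ∀ᵐ u ∂μI, |W u v| ≤ 1) (hρ : NormalizedLipschitz ρ)

noncomputable def gnnLayerLinf (h : Fin F → Fin F → Fin K → ℝ) (x : Fin F → Lp ℝ ∞ μI) :
    Fin F → Lp ℝ ∞ μI := fun f =>
  hρ.lipschitzWith.compLp hρ.2 (∑ g, ∑ k : Fin K, h f g k • (graphonOpLinf hWm hW ^ (k : ℕ)) (x g))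

theorem coeFn_gnnLayerLinf (h : Fin F → Fin F → Fin K → ℝ) {x : Fin F → Lp ℝ ∞ μI}
    {X : Fin F → ℝ → ℝ} (hxX : ∀ g, x g =ᵐ[μI] X g) (f : Fin F) :
    gnnLayerLinf hWm hW hρ h x f =ᵐ[μI] gnnLayer F K W ρ h X f := by
  set y : Fin F → Fin K → Lp ℝ ∞ μI := fun g k => (graphonOpLinf hWm hW ^ (k : ℕ)) (x g)
  have hy : ∀ᵐ u ∂μI, ∀ g k, y g k u = graphonIter W k (X g) u := by
    simp only [ae_all_iff]
    exact fun g k => (coeFn_graphonOpLinf_pow hWm hW k (x g)).trans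
      (graphonIter_congr_ae (hxX g) k)
  have hsum : ∀ᵐ u ∂μI, ∀ g, (∑ k, h f g k • y g k : Lp ℝ ∞ μI) u = ∑ k, h f g k * y g k u := by
    refine ae_all_iff.2 fun g => ?_
    filter_upwards [Lp.coeFn_fun_finsetSum Finset.univ (fun k => h f g k • y g k),
      ae_all_iff.2 fun k => Lp.coeFn_smul (h f g k) (y g k)] with u h1 h2
    simp only [h1, h2, Pi.smul_apply, smul_eq_mul]
  filter_upwards [hρ.lipschitzWith.coeFn_compLp hρ.2 (∑ g, ∑ k, h f g k • y g k),
    Lp.coeFn_fun_finsetSum Finset.univ (fun g => ∑ k, h f g k • y g k), hsum, hy]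
    with u h1 h2 h3 h4
  simp only [gnnLayerLinf, gnnLayer, y] at h1 h2 h3 h4 ⊢
  rw [h1, Function.comp_apply, h2]
  simp only [h3, h4]

theorem lipschitzWith_gnnLayerLinf (h : Fin F → Fin F → Fin K → ℝ) :
    LipschitzWith (∑ f, ∑ g, ∑ k, ‖h f g k‖₊) (gnnLayerLinf hWm hW hρ h) := by
  refine LipschitzWith.of_dist_le_mul fun x y => ?_
  rw [dist_eq_norm, dist_eq_norm, pi_norm_le_iff_of_nonneg (by positivity)]
  intro f
  calc ‖gnnLayerLinf hWm hW hρ h x f - gnnLayerLinf hWm hW hρ h y f‖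
      ≤ 1 * ‖∑ g, ∑ k : Fin K, h f g k • (graphonOpLinf hWm hW ^ (k : ℕ)) (x g - y g)‖ := by
        simp only [gnnLayerLinf, map_sub, smul_sub, Finset.sum_sub_distrib]
        exact hρ.lipschitzWith.norm_compLp_sub_le hρ.2 _ _
    _ ≤ ∑ g, ∑ k : Fin K, ‖h f g k‖ * ‖x - y‖ := by
        rw [one_mul]
        refine (norm_sum_le _ _).trans (Finset.sum_le_sum fun g _ => ?_)
        refine (norm_sum_le _ _).trans (Finset.sum_le_sum fun k _ => ?_)
        rw [norm_smul]
        gcongr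
        exact (norm_graphonOpLinf_pow_apply_le hWm hW k _).trans (norm_le_pi_norm (x - y) g)
    _ = (∑ g, ∑ k, ‖h f g k‖) * ‖x - y‖ := by simp only [Finset.sum_mul]
    _ ≤ (∑ f, ∑ g, ∑ k, ‖h f g k‖₊ : ℝ≥0) * ‖x - y‖ := by
        push_cast
        exact mul_le_mul_of_nonneg_right (Finset.single_le_sum (f := fun f => ∑ g, ∑ k, ‖h f g k‖)
          (fun _ _ => by positivity) (Finset.mem_univ f)) (norm_nonneg _)

theorem Continuous.gnnLayerLinf {α : Type*} [TopologicalSpace α]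
    {h : α → Fin F → Fin F → Fin K → ℝ} {x : α → Fin F → Lp ℝ ∞ μI} (hh : Continuous h)
    (hx : Continuous x) : Continuous fun a => gnnLayerLinf hWm hW hρ (h a) (x a) := by
  refine continuous_pi fun f => (hρ.lipschitzWith.continuous_compLp hρ.2).comp ?_
  fun_prop

noncomputable def gnnLinf (h : Fin L → Fin F → Fin F → Fin K → ℝ) (x : Fin F → Lp ℝ ∞ μI) :
    Fin F → Lp ℝ ∞ μI :=
  (List.ofFn h).foldl (fun y hl => gnnLayerLinf hWm hW hρ hl y) x

theorem gnnLinf_zero (h : Fin 0 → Fin F → Fin F → Fin K → ℝ) :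
    gnnLinf hWm hW hρ h = id := by
  funext x
  simp [gnnLinf]

theorem gnnLinf_succ (h : Fin (L + 1) → Fin F → Fin F → Fin K → ℝ) :
    gnnLinf hWm hW hρ h = gnnLinf hWm hW hρ (Fin.tail h) ∘ gnnLayerLinf hWm hW hρ (h 0) := by
  funext x
  simp only [gnnLinf, List.ofFn_succ, List.foldl_cons, Function.comp_apply]
  rfl

theorem coeFn_gnnLinf (h : Fin L → Fin F → Fin F → Fin K → ℝ) {x : Fin F → Lp ℝ ∞ μI}
    {X : Fin F → ℝ → ℝ} (hxX : ∀ g, x g =ᵐ[μI] X g) (f : Fin F) :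
    gnnLinf hWm hW hρ h x f =ᵐ[μI] gnn F K L W ρ h X f := by
  induction L generalizing x X with
  | zero => simpa [gnnLinf_zero, gnn] using hxX f
  | succ L ih =>
    rw [gnnLinf_succ, gnn_succ]
    exact ih _ (coeFn_gnnLayerLinf hWm hW hρ (h 0) hxX)

theorem lipschitzWith_gnnLinf (h : Fin L → Fin F → Fin F → Fin K → ℝ) :
    LipschitzWith (∏ ℓ, ∑ f, ∑ g, ∑ k, ‖h ℓ f g k‖₊) (gnnLinf hWm hW hρ h) := by
  induction L with
  | zero => simpa [gnnLinf_zero] using LipschitzWith.id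
  | succ L ih =>
    rw [gnnLinf_succ, Fin.prod_univ_succ, mul_comm]
    exact (ih _).comp (lipschitzWith_gnnLayerLinf hWm hW hρ (h 0))

theorem Continuous.gnnLinf {α : Type*} [TopologicalSpace α]
    {h : α → Fin L → Fin F → Fin F → Fin K → ℝ} {x : α → Fin F → Lp ℝ ∞ μI} (hh : Continuous h)
    (hx : Continuous x) : Continuous fun a => gnnLinf hWm hW hρ (h a) (x a) := by
  induction L generalizing x with
  | zero => simpa [gnnLinf_zero] using hx
  | succ L ih =>
    simp only [gnnLinf_succ, Function.comp_apply]
    exact ih (continuous_pi fun i => (continuous_apply i.succ).comp hh)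
      (Continuous.gnnLayerLinf hWm hW hρ ((continuous_apply 0).comp hh) hx)

theorem exists_lipschitzWith_gnnLinf_of_continuousOn {H : ℝ → Fin L → Fin F → Fin F → Fin K → ℝ}
    {s : Set ℝ} (hs : IsCompact s) (hH : ContinuousOn H s) :
    ∃ Λ, ∀ t ∈ s, LipschitzWith Λ (gnnLinf hWm hW hρ (H t)) := by
  obtain ⟨Λ, hΛ⟩ := hs.bddAbove_image
    (f := fun t => ∏ ℓ, ∑ f, ∑ g, ∑ k, ‖H t ℓ f g k‖₊) (by fun_prop)
  exact ⟨Λ, fun t ht => (lipschitzWith_gnnLinf hWm hW hρ (H t)).weaken (hΛ ⟨t, ht, rfl⟩)⟩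

theorem isGNDESolution_iff {T : ℝ} {H : ℝ → Fin L → Fin F → Fin F → Fin K → ℝ}
    (hH : ContinuousOn H (Icc 0 T)) {Z : Fin F → ℝ → ℝ} (hZ : ∀ f, MemLp (Z f) ∞ μI)
    {X : ℝ → Fin F → Lp ℝ ∞ μI} :
    IsGNDESolution F K L T W ρ H Z X ↔ X 0 = (fun f => (hZ f).toLp) ∧
      ∀ t ∈ Icc 0 T, HasDerivWithinAt X (gnnLinf hWm hW hρ (H t) (X t)) (Icc 0 T) t := by
  have hcoe : ∀ t f, gnnLinf hWm hW hρ (H t) (X t) f =ᵐ[μI] gnn F K L W ρ (H t) (X t ·) f :=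
    fun t => coeFn_gnnLinf hWm hW hρ (H t) fun _ => .rfl
  constructor
  · rintro ⟨hX0, X', -, hX'⟩
    refine ⟨funext fun f => Lp.ext ((hX0 f).trans (hZ f).coeFn_toLp.symm), fun t ht => ?_⟩
    convert (hX' t ht).1 using 1
    exact funext fun f => Lp.ext (((hX' t ht).2 f).trans (hcoe t f).symm).symm
  · rintro ⟨hX0, hX⟩
    refine ⟨fun f => hX0 ▸ (hZ f).coeFn_toLp, fun t => gnnLinf hWm hW hρ (H t) (X t), ?_,
      fun t ht => ⟨hX t ht, hcoe t⟩⟩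
    have hXc : ContinuousOn X (Icc 0 T) := fun t ht => (hX t ht).continuousWithinAt
    rw [continuousOn_iff_continuous_domRestrict]
    exact Continuous.gnnLinf hWm hW hρ hH.domRestrict hXc.domRestrict

end GnnLinf

theorem graphonNDE_wellPosed_general
    (F K L : ℕ)
    (ρ : ℝ → ℝ) (hρ : NormalizedLipschitz ρ)
    (T : ℝ) (hT : 0 < T)
    (H : ℝ → Fin L → Fin F → Fin F → Fin K → ℝ)
    (hH : ∀ ℓ f g k, ContinuousOn (fun t => H t ℓ f g k) (Set.Icc 0 T))
    (W : ℝ → ℝ → ℝ) (hWm : Measurable (Function.uncurry W))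
    (hWb : ∀ᵐ p ∂μI2, |Function.uncurry W p| ≤ 1)
    (Z : Fin F → ℝ → ℝ) (hZ : ∀ f, MemLp (Z f) ⊤ μI) :
    ∃ X : ℝ → Fin F → Lp ℝ ⊤ μI,
      IsGNDESolution F K L T W ρ H Z X ∧
      ∀ Y : ℝ → Fin F → Lp ℝ ⊤ μI,
        IsGNDESolution F K L T W ρ H Z Y → ∀ t ∈ Set.Icc (0:ℝ) T, Y t = X t := by
  have hW := ae_ae_swap_of_ae_μI2 hWb
  have hHc : ContinuousOn H (Icc 0 T) :=
    continuousOn_pi.2 fun ℓ => continuousOn_pi.2 fun f => continuousOn_pi.2 fun g =>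
      continuousOn_pi.2 fun k => hH ℓ f g k
  obtain ⟨Λ, hΛ⟩ := exists_lipschitzWith_gnnLinf_of_continuousOn hWm hW hρ isCompact_Icc hHc
  have hcont (x : Fin F → Lp ℝ ∞ μI) :
      ContinuousOn (fun t => gnnLinf hWm hW hρ (H t) x) (Icc 0 T) := by
    rw [continuousOn_iff_continuous_domRestrict]
    exact Continuous.gnnLinf hWm hW hρ hHc.domRestrict continuous_const
  obtain ⟨X, hX0, hX⟩ := exists_hasDerivWithinAt_Icc_of_lipschitzWith hT.le hΛ hcont _
  refine ⟨X, (isGNDESolution_iff hWm hW hρ hHc hZ).2 ⟨hX0, hX⟩, fun Y hY t ht => ?_⟩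
  obtain ⟨hY0, hY⟩ := (isGNDESolution_iff hWm hW hρ hHc hZ).1 hY
  exact eqOn_Icc_of_hasDerivWithinAt_of_lipschitzWith
    (fun t ht => hΛ t (Ico_subset_Icc_self ht)) hY hX (hY0.trans hX0.symm) ht

/-- **Well-posedness of Graphon-NDEs.**
If `ρ` is normalized Lipschitz, each filter coefficient `t ↦ H t ℓ f g k` is continuous on
`[0,T]`, `W : I² → ℝ` is measurable with `|W| ≤ 1` a.e., and `Z ∈ L^∞(I;ℝ^F)`, then for every
`T > 0` the Graphon-NDE `dX/dt = Φ(W; X(t); H(t))`, `X(0) = Z` has a unique solution that is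
continuously differentiable as a curve in the Banach space `L^∞(I;ℝ^F)`. -/
theorem graphonNDE_wellPosed
    (F K L : ℕ) (hF : 1 ≤ F) (hK : 1 ≤ K) (hL : 1 ≤ L)
    (ρ : ℝ → ℝ) (hρ : NormalizedLipschitz ρ)
    (T : ℝ) (hT : 0 < T)
    (H : ℝ → Fin L → Fin F → Fin F → Fin K → ℝ)
    (hH : ∀ ℓ f g k, ContinuousOn (fun t => H t ℓ f g k) (Set.Icc 0 T))
    (W : ℝ → ℝ → ℝ) (hWm : Measurable (Function.uncurry W))
    (hWb : ∀ᵐ p ∂μI2, |Function.uncurry W p| ≤ 1)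
    (Z : Fin F → ℝ → ℝ) (hZ : ∀ f, MemLp (Z f) ⊤ μI) :
    ∃ X : ℝ → Fin F → Lp ℝ ⊤ μI,
      IsGNDESolution F K L T W ρ H Z X ∧
      ∀ Y : ℝ → Fin F → Lp ℝ ⊤ μI,
        IsGNDESolution F K L T W ρ H Z Y → ∀ t ∈ Set.Icc (0:ℝ) T, Y t = X t :=
  graphonNDE_wellPosed_general F K L ρ hρ T hT H hH W hWm hWb Z hZ
end

section
/- Let p ∈ [1,∞], let ρ : ℝ → ℝ be normalized Lipschitz, let W : I² → ℝ be measurable with |W| ≤ 1 a.e., and let (h_{fgk})_{f,g ∈ {1,…,F}, k ∈ {0,…,K−1}} be real coefficients with |h_{fgk}| ≤ h̄ for all f,g,k. For X = (X_g)_{g=1}^F with X_g ∈ L^p(I), define Y = (Y_f)_{f=1}^F by Y_f := ρ( Σ_{g=1}^F Σ_{k=0}^{K−1} h_{fgk} T_W^k X_g ) (ρ applied pointwise). Then ‖Y‖_{L^p(I;ℝ^F)} ≤ F K h̄ ‖X‖_{L^p(I;ℝ^F)}. -/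
open MeasureTheory Filter Set
open scoped ENNReal NNReal

/-!
Since `|W| ≤ 1` a.e. and `I` has measure one, `‖T_W x‖_∞ ≤ ‖x‖_1 ≤ ‖x‖_p`, so every `T_W^k` is a
contraction of `L^p(I)`. As `|ρ t| ≤ |t|`, the triangle inequality then gives
`‖Y_f‖_p ≤ K h̄ ∑_g ‖X_g‖_p`, and Cauchy–Schwarz bounds `∑_g ‖X_g‖_p` by `√F ‖X‖`. Collecting
the `F` components of `Y` costs another factor `√F`.
-/

section KernelOperator

variable {α : Type*} [MeasurableSpace α] {μ : Measure α} {p : ℝ≥0∞} {W : α → α → ℝ} {x : α → ℝ}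

theorem aestronglyMeasurable_integral_kernel [SFinite μ]
    (hW : AEStronglyMeasurable (Function.uncurry W) (μ.prod μ)) (hx : AEStronglyMeasurable x μ) :
    AEStronglyMeasurable (fun v => ∫ u, W u v * x u ∂μ) μ :=
  ((hW.comp_measurePreserving Measure.measurePreserving_swap).mul
    (hx.comp_quasiMeasurePreserving Measure.quasiMeasurePreserving_snd)).integral_prod_right'

theorem ae_norm_integral_kernel_le [SFinite μ] (hW : ∀ᵐ q ∂μ.prod μ, |W q.1 q.2| ≤ 1)
    (hx : Integrable x μ) :
    ∀ᵐ v ∂μ, ‖∫ u, W u v * x u ∂μ‖ ≤ ∫ u, ‖x u‖ ∂μ := by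
  have hW' : ∀ᵐ v ∂μ, ∀ᵐ u ∂μ, |W u v| ≤ 1 :=
    Measure.ae_ae_of_ae_prod (Measure.measurePreserving_swap.quasiMeasurePreserving.ae hW)
  filter_upwards [hW'] with v hv
  refine (norm_integral_le_integral_norm _).trans <|
    integral_mono_of_nonneg (ae_of_all _ fun _ => norm_nonneg _) hx.norm ?_
  filter_upwards [hv] with u hu
  simpa only [norm_mul, Real.norm_eq_abs] using mul_le_of_le_one_left (abs_nonneg (x u)) hu

variable [IsProbabilityMeasure μ]

theorem eLpNorm_integral_kernel_le (hp : 1 ≤ p) (hW : ∀ᵐ q ∂μ.prod μ, |W q.1 q.2| ≤ 1)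
    (hx : MemLp x p μ) :
    eLpNorm (fun v => ∫ u, W u v * x u ∂μ) p μ ≤ eLpNorm x p μ :=
  calc eLpNorm (fun v => ∫ u, W u v * x u ∂μ) p μ
      ≤ ENNReal.ofReal (∫ u, ‖x u‖ ∂μ) := by
        simpa using
          eLpNorm_le_of_ae_bound (p := p) (ae_norm_integral_kernel_le hW (hx.integrable hp))
    _ = eLpNorm x 1 μ := by
        rw [ofReal_integral_norm_eq_lintegral_enorm (hx.integrable hp),
          eLpNorm_one_eq_lintegral_enorm]
    _ ≤ eLpNorm x p μ := eLpNorm_le_eLpNorm_of_exponent_le hp hx.aestronglyMeasurable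

theorem memLp_integral_kernel (hp : 1 ≤ p)
    (hWm : AEStronglyMeasurable (Function.uncurry W) (μ.prod μ))
    (hW : ∀ᵐ q ∂μ.prod μ, |W q.1 q.2| ≤ 1) (hx : MemLp x p μ) :
    MemLp (fun v => ∫ u, W u v * x u ∂μ) p μ :=
  ⟨aestronglyMeasurable_integral_kernel hWm hx.1,
    (eLpNorm_integral_kernel_le hp hW hx).trans_lt hx.2⟩

end KernelOperator

theorem toReal_eLpNorm_comp_sum_le {α ι : Type*} [MeasurableSpace α] {μ : Measure α}
    {p : ℝ≥0∞} (hp : 1 ≤ p) {ρ : ℝ → ℝ} (hρ : ∀ t, |ρ t| ≤ |t|) (s : Finset ι) (c : ι → ℝ)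
    {y : ι → α → ℝ} (hy : ∀ i, MemLp (y i) p μ) :
    (eLpNorm (fun u => ρ (∑ i ∈ s, c i * y i u)) p μ).toReal ≤
      ∑ i ∈ s, |c i| * (eLpNorm (y i) p μ).toReal := by
  have hfin : ∀ i ∈ s, ‖c i‖ₑ * eLpNorm (y i) p μ ≠ ∞ :=
    fun i _ => ENNReal.mul_ne_top enorm_ne_top (hy i).eLpNorm_ne_top
  have hle : eLpNorm (fun u => ρ (∑ i ∈ s, c i * y i u)) p μ ≤
      ∑ i ∈ s, ‖c i‖ₑ * eLpNorm (y i) p μ :=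
    calc eLpNorm (fun u => ρ (∑ i ∈ s, c i * y i u)) p μ
        ≤ eLpNorm (∑ i ∈ s, c i • y i) p μ :=
          eLpNorm_mono fun u => by simpa [Finset.sum_apply] using hρ _
      _ ≤ ∑ i ∈ s, eLpNorm (c i • y i) p μ :=
          eLpNorm_sum_le (fun i _ => ((hy i).const_smul (c i)).aestronglyMeasurable) hp
      _ = ∑ i ∈ s, ‖c i‖ₑ * eLpNorm (y i) p μ := by simp only [eLpNorm_const_smul]
  refine (ENNReal.toReal_mono (ENNReal.sum_ne_top.2 hfin) hle).trans_eq ?_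
  simp [ENNReal.toReal_sum hfin]

theorem NormalizedLipschitz.abs_le {ρ : ℝ → ℝ} (hρ : NormalizedLipschitz ρ) (t : ℝ) :
    |ρ t| ≤ |t| := by
  simpa [hρ.2] using hρ.1 t 0

theorem Real.sqrt_sum_sq_le_sqrt_card_mul {ι : Type*} [Fintype ι] {a : ι → ℝ} {C : ℝ}
    (hC : 0 ≤ C) (ha : ∀ i, |a i| ≤ C) :
    √(∑ i, a i ^ 2) ≤ √(Fintype.card ι) * C :=
  calc √(∑ i, a i ^ 2) ≤ √(∑ _i : ι, C ^ 2) :=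
        Real.sqrt_le_sqrt (Finset.sum_le_sum fun i _ => sq_le_sq.2 ((ha i).trans (le_abs_self C)))
    _ = √(Fintype.card ι) * C := by
        rw [Finset.sum_const, Finset.card_univ, nsmul_eq_mul,
          Real.sqrt_mul (Nat.cast_nonneg _), Real.sqrt_sq hC]

section Graphon

variable {p : ℝ≥0∞} {W : ℝ → ℝ → ℝ} {x : ℝ → ℝ}

theorem memLp_graphonIter (hp : 1 ≤ p) (hWm : Measurable (Function.uncurry W))
    (hWb : ∀ᵐ q ∂μI2, |Function.uncurry W q| ≤ 1) (hx : MemLp x p μI) (k : ℕ) :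
    MemLp (graphonIter W k x) p μI := by
  induction k with
  | zero => exact hx
  | succ k ih =>
    rw [graphonIter, Function.iterate_succ_apply']
    exact memLp_integral_kernel (μ := μI) hp hWm.aestronglyMeasurable (μI2_eq_prod ▸ hWb) ih

theorem eLpNorm_graphonIter_le (hp : 1 ≤ p) (hWm : Measurable (Function.uncurry W))
    (hWb : ∀ᵐ q ∂μI2, |Function.uncurry W q| ≤ 1) (hx : MemLp x p μI) (k : ℕ) :
    eLpNorm (graphonIter W k x) p μI ≤ eLpNorm x p μI := by
  induction k with
  | zero => exact le_rfl
  | succ k ih =>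
    rw [graphonIter, Function.iterate_succ_apply']
    exact (eLpNorm_integral_kernel_le (μ := μI) hp (μI2_eq_prod ▸ hWb)
      (memLp_graphonIter hp hWm hWb hx k)).trans ih

theorem toReal_eLpNorm_gnnLayer_le {F K : ℕ} (hp : 1 ≤ p) {ρ : ℝ → ℝ}
    (hρ : NormalizedLipschitz ρ) (hWm : Measurable (Function.uncurry W))
    (hWb : ∀ᵐ q ∂μI2, |Function.uncurry W q| ≤ 1) {h : Fin F → Fin F → Fin K → ℝ} {hbar : ℝ}
    (hh : ∀ f g k, |h f g k| ≤ hbar) {X : Fin F → ℝ → ℝ} (hX : ∀ g, MemLp (X g) p μI)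
    (f : Fin F) :
    (eLpNorm (gnnLayer F K W ρ h X f) p μI).toReal ≤
      K * hbar * ∑ g, (eLpNorm (X g) p μI).toReal :=
  calc (eLpNorm (gnnLayer F K W ρ h X f) p μI).toReal
      = (eLpNorm (fun u => ρ (∑ gk : Fin F × Fin K,
          h f gk.1 gk.2 * graphonIter W gk.2 (X gk.1) u)) p μI).toReal := by
        simp only [Fintype.sum_prod_type]
        rfl
    _ ≤ ∑ gk : Fin F × Fin K,
          |h f gk.1 gk.2| * (eLpNorm (graphonIter W gk.2 (X gk.1)) p μI).toReal :=
        toReal_eLpNorm_comp_sum_le hp hρ.abs_le _ _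
          fun gk => memLp_graphonIter hp hWm hWb (hX gk.1) gk.2
    _ ≤ ∑ gk : Fin F × Fin K, hbar * (eLpNorm (X gk.1) p μI).toReal := by
        refine Finset.sum_le_sum fun gk _ => ?_
        have hcontr := ENNReal.toReal_mono (hX gk.1).eLpNorm_ne_top
          (eLpNorm_graphonIter_le hp hWm hWb (hX gk.1) gk.2)
        exact (mul_le_mul_of_nonneg_left hcontr (abs_nonneg _)).trans
          (mul_le_mul_of_nonneg_right (hh f gk.1 gk.2) ENNReal.toReal_nonneg)
    _ = K * hbar * ∑ g, (eLpNorm (X g) p μI).toReal := by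
        simp [Fintype.sum_prod_type, Finset.mul_sum, mul_assoc]

end Graphon

/-- **Single-layer norm estimate.**
For a normalized Lipschitz activation, a kernel with `|W| ≤ 1` a.e., and filter coefficients
bounded by `h̄`, a single graphon-convolutional layer satisfies
`‖Y‖_{L^p(I;ℝ^F)} ≤ F K h̄ ‖X‖_{L^p(I;ℝ^F)}`. -/
theorem gnnLayer_norm_bound
    (F K : ℕ) (hF : 1 ≤ F) (hK : 1 ≤ K)
    (p : ℝ≥0∞) (hp : 1 ≤ p)
    (ρ : ℝ → ℝ) (hρ : NormalizedLipschitz ρ)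
    (W : ℝ → ℝ → ℝ) (hWm : Measurable (Function.uncurry W))
    (hWb : ∀ᵐ q ∂μI2, |Function.uncurry W q| ≤ 1)
    (h : Fin F → Fin F → Fin K → ℝ) (hbar : ℝ)
    (hh : ∀ f g k, |h f g k| ≤ hbar)
    (X : Fin F → ℝ → ℝ) (hX : ∀ g, MemLp (X g) p μI) :
    vecLpNorm F p (gnnLayer F K W ρ h X) ≤ (F : ℝ) * K * hbar * vecLpNorm F p X := by
  have hbar0 : 0 ≤ hbar := (abs_nonneg _).trans (hh ⟨0, hF⟩ ⟨0, hF⟩ ⟨0, hK⟩)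
  set S := ∑ g, (eLpNorm (X g) p μI).toReal
  have hS : S ≤ √F * vecLpNorm F p X := by
    simpa [vecLpNorm] using
      Real.sum_mul_le_sqrt_mul_sqrt Finset.univ (fun _ => 1) fun g => (eLpNorm (X g) p μI).toReal
  calc vecLpNorm F p (gnnLayer F K W ρ h X) ≤ √F * (K * hbar * S) := by
        simpa [vecLpNorm] using Real.sqrt_sum_sq_le_sqrt_card_mul (by positivity) fun f =>
          (abs_of_nonneg ENNReal.toReal_nonneg).trans_le
            (toReal_eLpNorm_gnnLayer_le hp hρ hWm hWb hh hX f)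
    _ ≤ √F * (K * hbar * (√F * vecLpNorm F p X)) := by gcongr
    _ = F * K * hbar * vecLpNorm F p X := by
        linear_combination (K * hbar * vecLpNorm F p X) * Real.mul_self_sqrt (Nat.cast_nonneg F)
end
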